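/- Let l ≥ 1, let d₁, …, d_l be pairwise distinct reals, and let (p_k, q_k) ∈ ℝ² for k = 1,…,l. Then for every real z ∉ {d₁, …, d_l}: ∏_{j=1}^{l} a(z, d_j; p_j, q_j) = I + Σ_{k=1}^{l} (z − d_k)^{-1} · [∏_{j=1}^{k−1} a(d_k, d_j; p_j, q_j)] · (column vector (p_k, q_k)) · (row vector (p_k, q_k)) · 𝔧 · [∏_{j=k+1}^{l} a(d_k, d_j; p_j, q_j)], where empty products are the identity matrix. -/

import Mathlib

open Matrix

/-- The matrix `𝔧 = [[0,−1],[1,0]]`. -/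
def jmat : Matrix (Fin 2) (Fin 2) ℝ := !![0, -1; 1, 0]

/-- The Blaschke–Potapov factor
`a(z,c;p,q) = I − (c−z)⁻¹ · (p,q)ᵀ(p,q) · 𝔧`, defined for `z ≠ c`. -/
noncomputable def bpa (z c p q : ℝ) : Matrix (Fin 2) (Fin 2) ℝ :=
  1 - (c - z)⁻¹ •
    ((!![p; q] : Matrix (Fin 2) (Fin 1) ℝ) * (!![p, q] : Matrix (Fin 1) (Fin 2) ℝ) * jmat)

/-- The Blaschke–Potapov factor at infinity
`a(z;p,q) = [[0, −p],[1/p, (z−pq)/p]]`, defined for `p ≠ 0`. -/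
noncomputable def bpinf (z p q : ℝ) : Matrix (Fin 2) (Fin 2) ℝ :=
  !![0, -p; 1 / p, (z - p * q) / p]

/-- Ordered (noncommutative) product `F s * F (s+1) * ⋯ * F (s+n−1)`;
for `n = 0` this is the identity matrix. -/
noncomputable def prodBP (F : ℕ → Matrix (Fin 2) (Fin 2) ℝ) (s n : ℕ) :
    Matrix (Fin 2) (Fin 2) ℝ :=
  ((List.range n).map fun i => F (s + i)).prod

/-- The transfer matrix
`𝔄(z) = a(z,c₁;p₀,q₀) ⋯ a(z,c_g;p_{g−1},q_{g−1}) · a(z;p_g,q_g)`. -/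
noncomputable def transferM (g : ℕ) (c p q : ℕ → ℝ) (z : ℝ) : Matrix (Fin 2) (Fin 2) ℝ :=
  prodBP (fun j => bpa z (c (j + 1)) (p j) (q j)) 0 g * bpinf z (p g) (q g)

noncomputable def Nmat (p q : ℝ) : Matrix (Fin 2) (Fin 2) ℝ :=
  (!![p; q] : Matrix (Fin 2) (Fin 1) ℝ) * (!![p, q] : Matrix (Fin 1) (Fin 2) ℝ) * jmat

lemma bpa_eq (z c p q : ℝ) : bpa z c p q = 1 + (z - c)⁻¹ • Nmat p q := by
  unfold bpa Nmat
  rw [sub_eq_add_neg, ← neg_smul, ← inv_neg, neg_sub]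

lemma prodBP_zero (F : ℕ → Matrix (Fin 2) (Fin 2) ℝ) (s : ℕ) : prodBP F s 0 = 1 := by
  simp [prodBP]

lemma prodBP_succ (F : ℕ → Matrix (Fin 2) (Fin 2) ℝ) (s n : ℕ) :
    prodBP F s (n + 1) = prodBP F s n * F (s + n) := by
  simp [prodBP, List.range_succ]

lemma scalar_pf (a b z : ℝ) (hab : a ≠ b) (hza : z ≠ a) (hzb : z ≠ b) :
    (z - a)⁻¹ * (z - b)⁻¹ = (z - a)⁻¹ * (a - b)⁻¹ + (z - b)⁻¹ * (b - a)⁻¹ := by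
  have h1 : z - a ≠ 0 := sub_ne_zero.mpr hza
  have h2 : z - b ≠ 0 := sub_ne_zero.mpr hzb
  have h3 : a - b ≠ 0 := sub_ne_zero.mpr hab
  have h4 : b - a ≠ 0 := sub_ne_zero.mpr (Ne.symm hab)
  field_simp
  ring

set_option maxHeartbeats 2000000 in
lemma key (d p q : ℕ → ℝ) : ∀ l, 1 ≤ l →
    (∀ i j, 1 ≤ i → i ≤ l → 1 ≤ j → j ≤ l → d i = d j → i = j) →
    ∀ z, (∀ j, 1 ≤ j → j ≤ l → z ≠ d j) →
    prodBP (fun j => bpa z (d j) (p j) (q j)) 1 l =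
      1 + ∑ k ∈ Finset.Icc 1 l, (z - d k)⁻¹ •
        (prodBP (fun j => bpa (d k) (d j) (p j) (q j)) 1 (k - 1) *
          Nmat (p k) (q k) *
          prodBP (fun j => bpa (d k) (d j) (p j) (q j)) (k + 1) (l - k)) := by
  intro l hl
  induction l, hl using Nat.le_induction with
  | base =>
    intro _ z hz
    simp [prodBP_succ, prodBP_zero, bpa_eq]
  | succ l hl IH =>
    intro hd z hz
    have hd' : ∀ i j, 1 ≤ i → i ≤ l → 1 ≤ j → j ≤ l → d i = d j → i = j := by
      intro i j h1 h2 h3 h4 h5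
      exact hd i j h1 (le_trans h2 (Nat.le_succ l)) h3 (le_trans h4 (Nat.le_succ l)) h5
    have hz' : ∀ j, 1 ≤ j → j ≤ l → z ≠ d j := fun j h1 h2 =>
      hz j h1 (le_trans h2 (Nat.le_succ l))
    have hdl : ∀ j, 1 ≤ j → j ≤ l → d (l + 1) ≠ d j := by
      intro j h1 h2 heq
      have := hd (l + 1) j (by omega) le_rfl h1 (by omega) heq
      omega
    -- abbreviations
    set R : ℕ → Matrix (Fin 2) (Fin 2) ℝ := fun k =>
      prodBP (fun j => bpa (d k) (d j) (p j) (q j)) 1 (k - 1) *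
        Nmat (p k) (q k) *
        prodBP (fun j => bpa (d k) (d j) (p j) (q j)) (k + 1) (l - k) with hR
    set M : Matrix (Fin 2) (Fin 2) ℝ := Nmat (p (l + 1)) (q (l + 1)) with hM
    -- LHS
    have hL : prodBP (fun j => bpa z (d j) (p j) (q j)) 1 (l + 1) =
        (1 + ∑ k ∈ Finset.Icc 1 l, (z - d k)⁻¹ • R k) *
          (1 + (z - d (l + 1))⁻¹ • M) := by
      rw [prodBP_succ, IH hd' z hz']
      congr 1
      show bpa z (d (1 + l)) (p (1 + l)) (q (1 + l)) = _
      rw [Nat.add_comm 1 l, bpa_eq]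
    rw [hL]
    -- RHS : split off top term
    rw [Finset.sum_Icc_succ_top (by omega : 1 ≤ l + 1)]
    -- rewrite the tail products for k ≤ l and the top term
    have htail : ∀ k ∈ Finset.Icc 1 l,
        (z - d k)⁻¹ •
          (prodBP (fun j => bpa (d k) (d j) (p j) (q j)) 1 (k - 1) *
            Nmat (p k) (q k) *
            prodBP (fun j => bpa (d k) (d j) (p j) (q j)) (k + 1) (l + 1 - k)) =
        (z - d k)⁻¹ • (R k * (1 + (d k - d (l + 1))⁻¹ • M)) := by
      intro k hk
      simp only [Finset.mem_Icc] at hk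
      have h1 : l + 1 - k = (l - k) + 1 := by omega
      rw [h1, prodBP_succ]
      have h2 : k + 1 + (l - k) = l + 1 := by omega
      rw [h2, bpa_eq]
      simp only [hR, hM]
      rw [← mul_assoc]
    rw [Finset.sum_congr rfl htail]
    -- top term
    have htop : (z - d (l + 1))⁻¹ •
        (prodBP (fun j => bpa (d (l + 1)) (d j) (p j) (q j)) 1 (l + 1 - 1) *
          Nmat (p (l + 1)) (q (l + 1)) *
          prodBP (fun j => bpa (d (l + 1)) (d j) (p j) (q j)) (l + 1 + 1) (l + 1 - (l + 1))) =
        (z - d (l + 1))⁻¹ •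
          ((1 + ∑ k ∈ Finset.Icc 1 l, (d (l + 1) - d k)⁻¹ • R k) * M) := by
      have h3 : l + 1 - 1 = l := by omega
      have h4 : l + 1 - (l + 1) = 0 := by omega
      rw [h3, h4, prodBP_zero, mul_one, IH hd' (d (l + 1)) hdl, ← hM]
    rw [htop]
    -- now pure algebra
    have expand : ∀ k ∈ Finset.Icc 1 l,
        (z - d k)⁻¹ • (R k * (1 + (d k - d (l + 1))⁻¹ • M)) =
        (z - d k)⁻¹ • R k + ((z - d k)⁻¹ * (d k - d (l + 1))⁻¹) • (R k * M) := by
      intro k hk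
      rw [mul_add, mul_one, smul_add, mul_smul_comm, smul_smul]
    rw [Finset.sum_congr rfl expand, Finset.sum_add_distrib]
    have expand2 : (z - d (l + 1))⁻¹ •
        ((1 + ∑ k ∈ Finset.Icc 1 l, (d (l + 1) - d k)⁻¹ • R k) * M) =
        (z - d (l + 1))⁻¹ • M +
          ∑ k ∈ Finset.Icc 1 l,
            ((z - d (l + 1))⁻¹ * (d (l + 1) - d k)⁻¹) • (R k * M) := by
      rw [add_mul, one_mul, Finset.sum_mul, smul_add, Finset.smul_sum]
      congr 1
      refine Finset.sum_congr rfl fun k hk => ?_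
      rw [smul_mul_assoc, smul_smul]
    rw [expand2]
    have lhs_expand : (1 + ∑ k ∈ Finset.Icc 1 l, (z - d k)⁻¹ • R k) *
          (1 + (z - d (l + 1))⁻¹ • M) =
        1 + (∑ k ∈ Finset.Icc 1 l, (z - d k)⁻¹ • R k + ((z - d (l + 1))⁻¹ • M +
          ∑ k ∈ Finset.Icc 1 l,
            ((z - d k)⁻¹ * (z - d (l + 1))⁻¹) • (R k * M))) := by
      rw [add_mul, mul_add, mul_add, one_mul, mul_one, Finset.sum_mul]
      have : ∀ k ∈ Finset.Icc 1 l,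
          (z - d k)⁻¹ • R k * ((z - d (l + 1))⁻¹ • M) =
          ((z - d k)⁻¹ * (z - d (l + 1))⁻¹) • (R k * M) := by
        intro k hk
        rw [smul_mul_assoc, mul_smul_comm, smul_smul]
      rw [Finset.sum_congr rfl this]
      simp only [one_mul, mul_one]
      abel
    rw [lhs_expand]
    congr 1
    have split : ∀ k ∈ Finset.Icc 1 l,
        ((z - d k)⁻¹ * (z - d (l + 1))⁻¹) • (R k * M) =
        ((z - d k)⁻¹ * (d k - d (l + 1))⁻¹) • (R k * M) +
          ((z - d (l + 1))⁻¹ * (d (l + 1) - d k)⁻¹) • (R k * M) := by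
      intro k hk
      simp only [Finset.mem_Icc] at hk
      rw [← add_smul, scalar_pf (d k) (d (l + 1)) z
        (fun h => hdl k hk.1 hk.2 h.symm)
        (hz' k hk.1 hk.2) (hz (l + 1) (by omega) le_rfl)]
    rw [Finset.sum_congr rfl split, Finset.sum_add_distrib]
    abel

/-- Partial fraction decomposition of a product of Blaschke–Potapov
factors with pairwise distinct poles `d₁,…,d_l`: for `z ∉ {d₁,…,d_l}`,
`∏_{j=1}^{l} a(z,d_j;p_j,q_j) = I + Σ_{k=1}^{l} (z−d_k)⁻¹ ·
[∏_{j=1}^{k−1} a(d_k,d_j;p_j,q_j)] · (p_k,q_k)ᵀ · (p_k,q_k) · 𝔧 ·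
[∏_{j=k+1}^{l} a(d_k,d_j;p_j,q_j)]`. -/
theorem statement8 (l : ℕ) (hl : 1 ≤ l) (d p q : ℕ → ℝ)
    (hd : ∀ i j, 1 ≤ i → i ≤ l → 1 ≤ j → j ≤ l → d i = d j → i = j)
    (z : ℝ) (hz : ∀ j, 1 ≤ j → j ≤ l → z ≠ d j) :
    prodBP (fun j => bpa z (d j) (p j) (q j)) 1 l =
      1 + ∑ k ∈ Finset.Icc 1 l, (z - d k)⁻¹ •
        (prodBP (fun j => bpa (d k) (d j) (p j) (q j)) 1 (k - 1) *
          (!![p k; q k] : Matrix (Fin 2) (Fin 1) ℝ) *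
          (!![p k, q k] : Matrix (Fin 1) (Fin 2) ℝ) * jmat *
          prodBP (fun j => bpa (d k) (d j) (p j) (q j)) (k + 1) (l - k)) := by
  rw [key d p q l hl hd z hz]
  congr 1
  refine Finset.sum_congr rfl fun k hk => ?_
  simp only [Nmat, Matrix.mul_assoc]
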